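/- Fix ϵ > 0 and g > 1. If A ∈ C²(ℝ,ℝ) and B ∈ C¹(ℝ,ℝ) satisfy J_{ϵ,g}(A,B) < ∞, then lim_{|x|→∞} P(A(x),B(x)) = 0 and lim_{|x|→∞} A'(x) = 0; moreover the limits lim_{x→+∞}(A(x),B(x)) and lim_{x→−∞}(A(x),B(x)) exist, and each belongs to the set {(1,0), (−1,0), (0,1), (0,−1)}. -/

import Mathlib

open Filter MeasureTheory
open scoped ENNReal

/-- `P(a,b) = (1/4)(a²+b²−1)² + (1/2)(g−1)a²b²`. -/
noncomputable def Pfun (g a b : ℝ) : ℝ :=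
  (1/4) * (a ^ 2 + b ^ 2 - 1) ^ 2 + (1/2) * (g - 1) * a ^ 2 * b ^ 2

/-- The functional `J_{ϵ,g}(A,B) = ∫_ℝ (ϵ/2)A''² + (1/2)B'² + P(A,B) ∈ [0,∞]`. -/
noncomputable def Jfun (ϵ g : ℝ) (A B : ℝ → ℝ) : ℝ≥0∞ :=
  ∫⁻ x : ℝ, ENNReal.ofReal ((ϵ/2) * (iteratedDeriv 2 A x) ^ 2
    + (1/2) * (deriv B x) ^ 2 + Pfun g (A x) (B x))

open Set intervalIntegral

set_option maxHeartbeats 1000000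

lemma le_zero_of_forall_pos {m : ℝ} (h : ∀ ε : ℝ, 0 < ε → m ≤ ε) : m ≤ 0 := by
  by_contra hm
  push_neg at hm
  linarith [h (m/2) (by linarith)]

lemma amgm_sqrt {m a b : ℝ} (ha : 0 ≤ a) (hb : 0 ≤ b)
    (h : ∀ t : ℝ, 0 < t → m ≤ a / (2*t) + t * b / 2) : m ≤ Real.sqrt (a*b) := by
  by_cases hb0 : b = 0
  · subst hb0
    refine le_trans (le_zero_of_forall_pos fun ε hε => ?_) (Real.sqrt_nonneg _)
    have := h (a/ε + 1) (by positivity)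
    have h2 : a / (2*(a/ε+1)) ≤ ε := by
      rw [div_le_iff₀ (by positivity)]
      have h3 : a / ε * ε = a := div_mul_cancel₀ a (ne_of_gt hε)
      nlinarith
    simp only [mul_zero, zero_div, add_zero] at this
    linarith
  · have hb' : 0 < b := lt_of_le_of_ne hb (Ne.symm hb0)
    by_cases ha0 : a = 0
    · subst ha0
      refine le_trans (le_zero_of_forall_pos fun ε hε => ?_) (Real.sqrt_nonneg _)
      have := h (2*ε/b) (by positivity)
      have h2 : (2*ε/b) * b / 2 = ε := by field_simp
      simp only [zero_div] at this
      linarith [this, h2.le, h2.ge]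
    · have ha' : 0 < a := lt_of_le_of_ne ha (Ne.symm ha0)
      set s := Real.sqrt (a*b) with hs
      have hs2 : s^2 = a*b := Real.sq_sqrt (by positivity)
      have hspos : 0 < s := Real.sqrt_pos.mpr (by positivity)
      have := h (s/b) (by positivity)
      have e1 : a / (2*(s/b)) = s/2 := by
        rw [div_eq_div_iff (by positivity) (by norm_num)]
        field_simp
        nlinarith
      have e2 : (s/b) * b / 2 = s/2 := by field_simp
      linarith [this, e1.le, e1.ge, e2.le, e2.ge]


/-- Cauchy–Schwarz for interval integrals of continuous functions. -/
lemma cs_interval (u : ℝ → ℝ) (hu : Continuous u) {x y : ℝ} (hxy : x ≤ y) :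
    |∫ t in x..y, u t| ≤ Real.sqrt ((∫ t in x..y, (u t)^2) * (y - x)) := by
  have hint : ∀ v : ℝ → ℝ, Continuous v → IntervalIntegrable v MeasureTheory.volume x y :=
    fun v hv => (hv.intervalIntegrable x y)
  apply amgm_sqrt
  · exact intervalIntegral.integral_nonneg hxy (fun t _ => sq_nonneg _)
  · linarith
  · intro t ht
    have key : ∀ s : ℝ, |u s| ≤ (u s)^2 / (2*t) + t/2 := by
      intro s
      rw [div_add_div _ _ (by positivity) (by norm_num), le_div_iff₀ (by positivity)]
      nlinarith [sq_nonneg (|u s| - t), sq_abs (u s)]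
    calc |∫ t in x..y, u t| ≤ ∫ s in x..y, |u s| := by
          apply intervalIntegral.abs_integral_le_integral_abs hxy
      _ ≤ ∫ s in x..y, ((u s)^2 / (2*t) + t/2) := by
          apply intervalIntegral.integral_mono_on hxy (hint _ hu.abs)
            ((hint _ (hu.pow 2)).div_const _ |>.add (intervalIntegrable_const))
          exact fun s _ => key s
      _ = (∫ s in x..y, (u s)^2) / (2*t) + t * (y-x) / 2 := by
          rw [intervalIntegral.integral_add ((hint (fun s => (u s)^2) (hu.pow 2)).div_const _) intervalIntegrable_const]
          rw [intervalIntegral.integral_div, intervalIntegral.integral_const]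
          ring_nf


/-- The tail integral of a nonnegative integrable function tends to 0. -/
lemma tendsto_tail_integral {f : ℝ → ℝ} (hf : Integrable f) :
    Tendsto (fun a => ∫ t in Ici a, ‖f t‖) atTop (nhds 0) := by
  have L : Tendsto (fun n : ℕ => ∫ t in Ici (n : ℝ), ‖f t‖) atTop
      (nhds (∫ t in ⋂ n : ℕ, Ici (n : ℝ), ‖f t‖)) := by
    apply tendsto_setIntegral_of_antitone (fun n => measurableSet_Ici)
    · intro m n hmn
      exact Ici_subset_Ici.2 (Nat.cast_le.mpr hmn)
    · exact ⟨0, hf.norm.integrableOn⟩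
  have B : ⋂ n : ℕ, Ici ((n : ℕ) : ℝ) = ∅ := by
    apply eq_empty_of_forall_notMem fun x => ?_
    simpa only [mem_iInter, mem_Ici, not_forall, not_le] using exists_nat_gt x
  rw [B] at L
  simp only [Measure.restrict_empty, integral_zero_measure] at L
  rw [Metric.tendsto_atTop] at L ⊢
  intro ε hε
  obtain ⟨N, hN⟩ := L ε hε
  refine ⟨N, fun a ha => ?_⟩
  have h1 : ∫ t in Ici a, ‖f t‖ ≤ ∫ t in Ici ((N:ℕ):ℝ), ‖f t‖ := by
    apply setIntegral_mono_set hf.norm.integrableOn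
    · exact Eventually.of_forall fun t => norm_nonneg _
    · exact HasSubset.Subset.eventuallyLE (Ici_subset_Ici.2 ha)
  have h2 := hN N le_rfl
  have h3 : (0:ℝ) ≤ ∫ t in Ici a, ‖f t‖ := setIntegral_nonneg measurableSet_Ici fun t _ => norm_nonneg _
  rw [Real.dist_eq] at h2 ⊢
  rw [abs_lt] at h2 ⊢
  constructor
  · linarith
  · linarith [h2.2]


/-- FTC move bound for a `C¹` function. -/
lemma ftc_move {U : ℝ → ℝ} (hU : ContDiff ℝ 1 U) {x y : ℝ} (hxy : x ≤ y) :
    |U y - U x| ≤ Real.sqrt ((∫ t in x..y, (deriv U t)^2) * (y - x)) := by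
  have hder := hU.continuous_deriv le_rfl
  have hftc : ∫ t in x..y, deriv U t = U y - U x :=
    intervalIntegral.integral_deriv_eq_sub
      (fun t _ => (hU.differentiable one_ne_zero).differentiableAt)
      (hder.intervalIntegrable x y)
  rw [← hftc]
  exact cs_interval _ hder hxy

/-- Local square integral is bounded by the tail integral. -/
lemma loc_le_tail {u : ℝ → ℝ} (hu : Continuous u)
    (hint : Integrable (fun t => (u t)^2)) {X x y : ℝ} (hX : X ≤ x) (hxy : x ≤ y) :
    ∫ t in x..y, (u t)^2 ≤ ∫ t in Ici X, (u t)^2 := by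
  rw [intervalIntegral.integral_of_le hxy]
  apply setIntegral_mono_set hint.integrableOn
  · exact Eventually.of_forall fun t => sq_nonneg _
  · exact HasSubset.Subset.eventuallyLE fun t ht => le_trans hX (le_of_lt ht.1)

/-- Local square integral bounded by global integral. -/
lemma loc_le_glob {u : ℝ → ℝ} (hu : Continuous u)
    (hint : Integrable (fun t => (u t)^2)) {x y : ℝ} (hxy : x ≤ y) :
    ∫ t in x..y, (u t)^2 ≤ ∫ t, (u t)^2 := by
  rw [intervalIntegral.integral_of_le hxy]
  exact setIntegral_le_integral hint (Eventually.of_forall fun t => sq_nonneg _)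


lemma tendsto_tail_integral_nonneg {f : ℝ → ℝ} (hf : Integrable f) (h0 : ∀ x, 0 ≤ f x) :
    Tendsto (fun a => ∫ t in Ici a, f t) atTop (nhds 0) := by
  have := tendsto_tail_integral hf
  refine this.congr fun a => ?_
  apply setIntegral_congr_fun measurableSet_Ici
  intro t _
  exact Real.norm_of_nonneg (h0 t)

/-- Bound on the first derivative of a bounded `C²` function with square-integrable
second derivative. -/
lemma A1_bounded {A : ℝ → ℝ} (hA : ContDiff ℝ 2 A)
    (hA2 : Integrable (fun x => (iteratedDeriv 2 A x)^2)) {MA : ℝ}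
    (hMA : ∀ x, |A x| ≤ MA) (x : ℝ) :
    |deriv A x| ≤ Real.sqrt (∫ t, (iteratedDeriv 2 A t)^2) + 2*MA := by
  have hA1 : ContDiff ℝ 1 (deriv A) :=
    (contDiff_succ_iff_deriv.mp (show ContDiff ℝ (1+1) A by exact_mod_cast hA)).2.2
  have hAd : Differentiable ℝ A := hA.differentiable (by norm_num)
  have hA1c : Continuous (deriv A) := hA1.continuous
  have hiter : deriv (deriv A) = iteratedDeriv 2 A := by
    rw [iteratedDeriv_succ, iteratedDeriv_one]
  have hA2cont : Continuous (iteratedDeriv 2 A) := hiter ▸ (hA1.continuous_deriv le_rfl)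
  obtain ⟨CA2, hCA2def⟩ : ∃ CA2 : ℝ, CA2 = ∫ t, (iteratedDeriv 2 A t)^2 := ⟨_, rfl⟩
  have hCA20 : 0 ≤ CA2 := hCA2def ▸ integral_nonneg fun t => sq_nonneg _
  obtain ⟨K2, hK2def⟩ : ∃ K2 : ℝ, K2 = Real.sqrt CA2 := ⟨_, rfl⟩
  have hK20 : 0 ≤ K2 := hK2def ▸ Real.sqrt_nonneg _
  have hMA0 : 0 ≤ MA := le_trans (abs_nonneg _) (hMA 0)
  rw [← hCA2def, ← hK2def]
  have holder : ∀ w ∈ Icc x (x+1), |deriv A w - deriv A x| ≤ K2 := by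
    intro w hw
    have h1 := ftc_move hA1 hw.1
    rw [hiter] at h1
    have h2 : (∫ t in x..w, (iteratedDeriv 2 A t)^2) * (w - x) ≤ CA2 * 1 := by
      apply mul_le_mul
      · rw [hCA2def]; exact loc_le_glob hA2cont hA2 hw.1
      · linarith [hw.1, hw.2]
      · linarith [hw.1]
      · exact hCA20
    calc |deriv A w - deriv A x|
        ≤ Real.sqrt ((∫ t in x..w, (iteratedDeriv 2 A t)^2) * (w - x)) := h1
      _ ≤ Real.sqrt (CA2 * 1) := Real.sqrt_le_sqrt h2
      _ = K2 := by rw [mul_one, hK2def]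
  by_contra hcon
  push_neg at hcon
  have ftcA : ∫ t in x..(x+1), deriv A t = A (x+1) - A x :=
    intervalIntegral.integral_deriv_eq_sub (fun t _ => hAd t) (hA1c.intervalIntegrable _ _)
  have hbnd : |A (x+1) - A x| ≤ 2*MA := by
    calc |A (x+1) - A x| ≤ |A (x+1)| + |A x| := abs_sub _ _
      _ ≤ 2*MA := by linarith [hMA (x+1), hMA x]
  rcases abs_cases (deriv A x) with ⟨he, _⟩ | ⟨he, _⟩
  · have hpos : ∀ w ∈ Icc x (x+1), deriv A x - K2 ≤ deriv A w := by
      intro w hw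
      have := holder w hw
      rw [abs_sub_le_iff] at this
      linarith [this.2]
    have hmono : (deriv A x - K2) * (x + 1 - x) ≤ ∫ t in x..(x+1), deriv A t := by
      have h := intervalIntegral.integral_mono_on (μ := volume) (by linarith : x ≤ x+1)
        (_root_.intervalIntegrable_const (c := deriv A x - K2)) (hA1c.intervalIntegrable _ _) hpos
      rwa [intervalIntegral.integral_const, smul_eq_mul, mul_comm] at h
    rw [ftcA] at hmono
    have h2 := le_abs_self (A (x+1) - A x)
    rw [he] at hcon
    nlinarith
  · have hneg : ∀ w ∈ Icc x (x+1), deriv A w ≤ deriv A x + K2 := by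
      intro w hw
      have := holder w hw
      rw [abs_sub_le_iff] at this
      linarith [this.1]
    have hmono : ∫ t in x..(x+1), deriv A t ≤ (deriv A x + K2) * (x + 1 - x) := by
      have h := intervalIntegral.integral_mono_on (μ := volume) (by linarith : x ≤ x+1)
        (hA1c.intervalIntegrable _ _) (_root_.intervalIntegrable_const (c := deriv A x + K2)) hneg
      rwa [intervalIntegral.integral_const, smul_eq_mul, mul_comm] at h
    rw [ftcA] at hmono
    have h2 := neg_abs_le (A (x+1) - A x)
    rw [he] at hcon
    nlinarith


lemma Pfun_continuous (g : ℝ) : Continuous (fun p : ℝ × ℝ => Pfun g p.1 p.2) := by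
  unfold Pfun; fun_prop

lemma Pfun_nonneg {g : ℝ} (hg : 1 < g) (a b : ℝ) : 0 ≤ Pfun g a b := by
  unfold Pfun
  nlinarith [sq_nonneg (a^2 + b^2 - 1), sq_nonneg (a*b), sq_nonneg a, sq_nonneg b]

lemma Pfun_zero_mem {g a b : ℝ} (hg : 1 < g) (h : Pfun g a b = 0) :
    (a, b) ∈ ({(1, 0), (-1, 0), (0, 1), (0, -1)} : Set (ℝ × ℝ)) := by
  unfold Pfun at h
  have h1 : (a^2 + b^2 - 1)^2 = 0 ∧ a^2 * b^2 = 0 := by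
    constructor <;> nlinarith [sq_nonneg (a^2 + b^2 - 1), sq_nonneg (a*b), sq_nonneg a, sq_nonneg b,
      mul_nonneg (mul_nonneg (sq_nonneg a) (sq_nonneg b)) (by linarith : (0:ℝ) ≤ g - 1)]
  have h2 : a^2 + b^2 = 1 := by nlinarith [h1.1, sq_nonneg (a^2+b^2-1)]
  have h3 : a = 0 ∨ b = 0 := by
    rcases mul_eq_zero.mp h1.2 with h | h
    · exact Or.inl (by nlinarith [sq_nonneg a])
    · exact Or.inr (by nlinarith [sq_nonneg b])
  simp only [Set.mem_insert_iff, Set.mem_singleton_iff, Prod.ext_iff]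
  rcases h3 with h | h
  · subst h
    have : (b-1)*(b+1) = 0 := by nlinarith
    rcases mul_eq_zero.mp this with h | h
    · exact Or.inr (Or.inr (Or.inl ⟨rfl, by linarith⟩))
    · exact Or.inr (Or.inr (Or.inr ⟨rfl, by linarith⟩))
  · subst h
    have : (a-1)*(a+1) = 0 := by nlinarith
    rcases mul_eq_zero.mp this with h | h
    · exact Or.inl ⟨by linarith, rfl⟩
    · exact Or.inr (Or.inl ⟨by linarith, rfl⟩)

lemma Pfun_pos {g a b : ℝ} (hg : 1 < g)
    (h : (a, b) ∉ ({(1, 0), (-1, 0), (0, 1), (0, -1)} : Set (ℝ × ℝ))) :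
    0 < Pfun g a b := by
  rcases eq_or_lt_of_le (Pfun_nonneg hg a b) with h0 | h0
  · exact absurd (Pfun_zero_mem hg h0.symm) h
  · exact h0

lemma S_dist : ∀ p ∈ ({(1, 0), (-1, 0), (0, 1), (0, -1)} : Set (ℝ × ℝ)),
    ∀ q ∈ ({(1, 0), (-1, 0), (0, 1), (0, -1)} : Set (ℝ × ℝ)), p ≠ q → (1:ℝ) ≤ dist p q := by
  intro p hp q hq hne
  simp only [Set.mem_insert_iff, Set.mem_singleton_iff] at hp hq
  rcases hp with rfl | rfl | rfl | rfl <;> rcases hq with rfl | rfl | rfl | rfl <;>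
    first
      | exact absurd rfl hne
      | (simp only [Prod.dist_eq, Real.dist_eq]; norm_num [le_max_iff, abs_le])

lemma converge_of_P_to_zero {g : ℝ} (hg : 1 < g) {A B : ℝ → ℝ} {MA MB : ℝ}
    (hAc : Continuous A) (hBc : Continuous B)
    (hMA : ∀ x, |A x| ≤ MA) (hMB : ∀ x, |B x| ≤ MB)
    (hPz : Tendsto (fun x => Pfun g (A x) (B x)) atTop (nhds 0)) :
    ∃ L ∈ ({(1, 0), (-1, 0), (0, 1), (0, -1)} : Set (ℝ × ℝ)),
      Tendsto (fun x => (A x, B x)) atTop (nhds L) := by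
  set S : Set (ℝ × ℝ) := {(1, 0), (-1, 0), (0, 1), (0, -1)} with hS
  set box : Set (ℝ × ℝ) := Icc (-MA) MA ×ˢ Icc (-MB) MB with hbox
  have hboxcpt : IsCompact box := isCompact_Icc.prod isCompact_Icc
  have hmem : ∀ x : ℝ, (A x, B x) ∈ box := by
    intro x
    exact ⟨abs_le.mp (hMA x), abs_le.mp (hMB x)⟩
  have hvc : Continuous (fun x => (A x, B x)) := hAc.prodMk hBc
  -- step 1 : for every δ > 0, eventually (A x, B x) is within δ of some well
  have approx : ∀ δ : ℝ, 0 < δ → ∀ᶠ x in atTop, ∃ p ∈ S, dist (A x, B x) p < δ := by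
    intro δ hδ
    set T : Set (ℝ × ℝ) := box \ (⋃ p ∈ S, Metric.ball p δ) with hT
    have hTcpt : IsCompact T := hboxcpt.diff (isOpen_biUnion fun p _ => Metric.isOpen_ball)
    rcases eq_empty_or_nonempty T with hTe | hTne
    · apply Eventually.of_forall
      intro x
      have h1 : (A x, B x) ∉ T := by rw [hTe]; exact notMem_empty _
      rw [hT, mem_diff] at h1
      push_neg at h1
      have h2 := h1 (hmem x)
      rw [mem_iUnion₂] at h2
      obtain ⟨p, hp, hball⟩ := h2
      exact ⟨p, hp, Metric.mem_ball.mp hball⟩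
    · obtain ⟨v₀, hv₀T, hmin⟩ :=
        hTcpt.exists_isMinOn hTne (Pfun_continuous g).continuousOn
      have hv₀S : (v₀.1, v₀.2) ∉ S := by
        rw [Prod.mk.eta]
        intro hv₀S
        apply hv₀T.2
        rw [mem_iUnion₂]
        exact ⟨v₀, hv₀S, Metric.mem_ball_self hδ⟩
      have hc0 : 0 < Pfun g v₀.1 v₀.2 := Pfun_pos hg hv₀S
      have hev := hPz.eventually (eventually_lt_nhds hc0) -- ?
      filter_upwards [hev] with x hx
      have h1 : (A x, B x) ∉ T := by
        intro hmem'
        have := hmin hmem'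
        simp only at this
        exact absurd hx (not_lt.mpr this)
      rw [hT, mem_diff] at h1
      push_neg at h1
      have h2 := h1 (hmem x)
      rw [mem_iUnion₂] at h2
      obtain ⟨p, hp, hball⟩ := h2
      exact ⟨p, hp, Metric.mem_ball.mp hball⟩
  -- step 2: trapping in a single well
  obtain ⟨X, hX⟩ := (approx (1/4) (by norm_num)).exists_forall_of_atTop
  obtain ⟨s₀, hs₀S, hs₀⟩ := hX X le_rfl
  have trapped : ∀ x, X ≤ x → dist (A x, B x) s₀ < 1/4 := by
    have hsub : Ici X ⊆ (fun x => (A x, B x)) ⁻¹' (Metric.ball s₀ (1/4)) ∪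
        (fun x => (A x, B x)) ⁻¹' (⋃ p ∈ S \ {s₀}, Metric.ball p (1/4)) := by
      intro x hx
      obtain ⟨p, hpS, hpd⟩ := hX x hx
      by_cases hps : p = s₀
      · left; rw [mem_preimage, Metric.mem_ball]; rw [hps] at hpd; exact hpd
      · right; rw [mem_preimage, mem_iUnion₂]
        exact ⟨p, ⟨hpS, hps⟩, Metric.mem_ball.mpr hpd⟩
    have hdisj : Disjoint ((fun x => (A x, B x)) ⁻¹' (Metric.ball s₀ (1/4)))
        ((fun x => (A x, B x)) ⁻¹' (⋃ p ∈ S \ {s₀}, Metric.ball p (1/4))) := by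
      rw [Set.disjoint_iff]
      rintro x ⟨h1, h2⟩
      rw [mem_preimage, mem_iUnion₂] at h2
      obtain ⟨p, hp, hball⟩ := h2
      rw [mem_preimage, Metric.mem_ball] at h1
      rw [Metric.mem_ball] at hball
      have := S_dist p hp.1 s₀ hs₀S hp.2
      have htri := dist_triangle p (A x, B x) s₀
      rw [dist_comm p (A x, B x)] at htri
      linarith
    have := isPreconnected_Ici.subset_or_subset
      (Metric.isOpen_ball.preimage hvc)
      ((isOpen_biUnion fun p _ => Metric.isOpen_ball).preimage hvc)
      hdisj hsub
    rcases this with h | h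
    · intro x hx
      have := h (mem_Ici.mpr hx)
      rw [mem_preimage, Metric.mem_ball] at this
      exact this
    · exfalso
      have hXmem := h (mem_Ici.mpr le_rfl)
      have : X ∈ (fun x => (A x, B x)) ⁻¹' Metric.ball s₀ (1/4) := by
        rw [mem_preimage, Metric.mem_ball]; exact hs₀
      exact (Set.disjoint_iff.mp hdisj ⟨this, hXmem⟩)
  -- step 3: convergence
  refine ⟨s₀, hs₀S, ?_⟩
  rw [Metric.tendsto_atTop]
  intro ε hε
  have hδ' : (0:ℝ) < min (ε/2) (1/8) := lt_min (by linarith) (by norm_num)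
  obtain ⟨X', hX'⟩ := (approx _ hδ').exists_forall_of_atTop
  refine ⟨max X X', fun x hx => ?_⟩
  obtain ⟨p, hpS, hpd⟩ := hX' x (le_trans (le_max_right _ _) hx)
  have htrap := trapped x (le_trans (le_max_left _ _) hx)
  by_cases hps : p = s₀
  · rw [hps] at hpd
    calc dist (A x, B x) s₀ < min (ε/2) (1/8) := hpd
      _ ≤ ε/2 := min_le_left _ _
      _ < ε := by linarith
  · exfalso
    have := S_dist p hpS s₀ hs₀S hps
    have htri := dist_triangle p (A x, B x) s₀
    rw [dist_comm p (A x, B x)] at htri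
    have : min (ε/2) (1/8) ≤ 1/8 := min_le_right _ _
    linarith [S_dist p hpS s₀ hs₀S hps, min_le_right (ε/2) (1/8 : ℝ)]


/-- A `C¹` function whose derivative is square integrable and such that
`(B² - 1)²` is dominated by an integrable function is bounded. -/
lemma B_bounded {B q : ℝ → ℝ} (hB : ContDiff ℝ 1 B)
    (hB1 : Integrable (fun x => (deriv B x)^2))
    (hq : Integrable q) (hq0 : ∀ x, 0 ≤ q x)
    (hlow : ∀ x, 1 ≤ (B x)^2 → ((B x)^2 - 1)^2 ≤ q x) :
    ∃ M : ℝ, 0 ≤ M ∧ ∀ x, |B x| ≤ M := by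
  set CB := ∫ t, (deriv B t)^2 with hCB
  set CQ := ∫ t, q t with hCQ
  have hCB0 : 0 ≤ CB := integral_nonneg fun t => sq_nonneg _
  have hCQ0 : 0 ≤ CQ := integral_nonneg hq0
  set s := Real.sqrt (1 + Real.sqrt (CQ + 1)) with hs
  set M := Real.sqrt CB + s with hM
  have hs0 : 0 ≤ s := Real.sqrt_nonneg _
  refine ⟨M, by positivity, fun x => ?_⟩
  by_contra hcon
  push_neg at hcon
  -- every point of [x, x+1] has |B y| > s
  have key : ∀ y ∈ Icc x (x+1), CQ + 1 ≤ q y := by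
    intro y hy
    have h1 : |B y - B x| ≤ Real.sqrt CB := by
      have := ftc_move hB hy.1
      have h2 : (∫ t in x..y, (deriv B t)^2) * (y - x) ≤ CB * 1 := by
        apply mul_le_mul (loc_le_glob (hB.continuous_deriv le_rfl) hB1 hy.1)
          (by linarith [hy.1, hy.2]) (by linarith [hy.1]) hCB0
      calc |B y - B x| ≤ Real.sqrt ((∫ t in x..y, (deriv B t)^2) * (y - x)) := this
        _ ≤ Real.sqrt (CB * 1) := Real.sqrt_le_sqrt h2
        _ = Real.sqrt CB := by rw [mul_one]
    have h3 : s < |B y| := by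
      have := abs_sub_abs_le_abs_sub (B x) (B y)
      rw [abs_sub_comm] at h1
      simp only [hM] at hcon
      linarith
    have h4 : s^2 < (B y)^2 := by
      rw [← sq_abs (B y)]
      exact pow_lt_pow_left₀ h3 hs0 (by norm_num)
    have h5 : s^2 = 1 + Real.sqrt (CQ + 1) := Real.sq_sqrt (by positivity)
    have h6 : 1 ≤ (B y)^2 := by
      have := Real.sqrt_nonneg (CQ + 1); linarith
    have h7 : Real.sqrt (CQ+1) < (B y)^2 - 1 := by linarith
    have h8 : CQ + 1 ≤ ((B y)^2 - 1)^2 := by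
      have h9 : Real.sqrt (CQ+1)^2 ≤ ((B y)^2 - 1)^2 :=
        pow_le_pow_left₀ (Real.sqrt_nonneg _) h7.le 2
      rwa [Real.sq_sqrt (by positivity)] at h9
    linarith [hlow y h6]
  -- integrate over [x, x+1]
  have hint : CQ + 1 ≤ ∫ y in Icc x (x+1), q y := by
    have := setIntegral_ge_of_const_le_real (measurableSet_Icc)
      (by rw [Real.volume_Icc]; exact ENNReal.ofReal_ne_top) key hq.integrableOn
    rwa [measureReal_def, Real.volume_Icc, show x + 1 - x = 1 by ring, ENNReal.toReal_ofReal zero_le_one,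
      mul_one] at this
  have hub : ∫ y in Icc x (x+1), q y ≤ CQ :=
    setIntegral_le_integral hq (Eventually.of_forall hq0)
  linarith


lemma A_bounded {A q : ℝ → ℝ} (hA : ContDiff ℝ 2 A)
    (hA2 : Integrable (fun x => (iteratedDeriv 2 A x)^2))
    (hq : Integrable q) (hq0 : ∀ x, 0 ≤ q x)
    (hlow : ∀ x (c : ℝ), 0 ≤ c → 1 + c ≤ (A x)^2 → c^2 ≤ q x) :
    ∃ M : ℝ, 0 ≤ M ∧ ∀ x, |A x| ≤ M := by
  have hA1 : ContDiff ℝ 1 (deriv A) :=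
    (contDiff_succ_iff_deriv.mp (show ContDiff ℝ (1+1) A by exact_mod_cast hA)).2.2
  have hAd : Differentiable ℝ A := hA.differentiable (by norm_num)
  have hA1c : Continuous (deriv A) := hA1.continuous
  have hiter : deriv (deriv A) = iteratedDeriv 2 A := by
    rw [iteratedDeriv_succ, iteratedDeriv_one]
  have hA2cont : Continuous (iteratedDeriv 2 A) := hiter ▸ (hA1.continuous_deriv le_rfl)
  obtain ⟨CQ, hCQdef⟩ : ∃ CQ : ℝ, CQ = ∫ t, q t := ⟨_, rfl⟩
  have hCQ0 : 0 ≤ CQ := hCQdef ▸ integral_nonneg hq0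
  obtain ⟨CA2, hCA2def⟩ : ∃ CA2 : ℝ, CA2 = ∫ t, (iteratedDeriv 2 A t)^2 := ⟨_, rfl⟩
  have hCA20 : 0 ≤ CA2 := hCA2def ▸ integral_nonneg fun t => sq_nonneg _
  obtain ⟨K2, hK2def⟩ : ∃ K2 : ℝ, K2 = Real.sqrt CA2 := ⟨_, rfl⟩
  have hK20 : 0 ≤ K2 := hK2def ▸ Real.sqrt_nonneg _
  obtain ⟨c, hcdef⟩ : ∃ c : ℝ, c = Real.sqrt (CQ + 1) := ⟨_, rfl⟩
  have hc0 : 0 ≤ c := hcdef ▸ Real.sqrt_nonneg _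
  have hc2 : c^2 = CQ + 1 := by rw [hcdef]; exact Real.sq_sqrt (by positivity)
  obtain ⟨s, hsdef⟩ : ∃ s : ℝ, s = Real.sqrt (1 + c) := ⟨_, rfl⟩
  have hs1 : 1 ≤ s := by
    have := Real.sqrt_le_sqrt (show (1:ℝ) ≤ 1 + c by linarith)
    rwa [Real.sqrt_one, ← hsdef] at this
  have hs2 : s^2 = 1 + c := by rw [hsdef]; exact Real.sq_sqrt (by linarith)
  obtain ⟨M, hMdef⟩ : ∃ M : ℝ, M = 64*s + 12*(K2+1) := ⟨_, rfl⟩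
  have hM0 : 0 < M := by rw [hMdef]; positivity
  refine ⟨M, hM0.le, fun x₀ => ?_⟩
  by_contra hcon
  push_neg at hcon
  have holder : ∀ z w : ℝ, z ≤ w → w ≤ z + 2 → |deriv A w - deriv A z| ≤ M/8 := by
    intro z w hzw hw2
    have h1 := ftc_move hA1 hzw
    rw [hiter] at h1
    have h2 : (∫ t in z..w, (iteratedDeriv 2 A t)^2) * (w - z) ≤ CA2 * 2 := by
      apply mul_le_mul
      · rw [hCA2def]
        exact loc_le_glob hA2cont hA2 hzw
      · linarith
      · linarith
      · exact hCA20
    have h3 : Real.sqrt (CA2 * 2) ≤ M / 8 := by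
      rw [show CA2 * 2 = (K2 * Real.sqrt 2)^2 by
        rw [mul_pow, hK2def, Real.sq_sqrt hCA20, Real.sq_sqrt (by norm_num : (0:ℝ) ≤ 2)]]
      rw [Real.sqrt_sq (by positivity)]
      have hr2 : Real.sqrt 2 ≤ 3/2 := by
        rw [show (3:ℝ)/2 = Real.sqrt ((3/2)^2) by rw [Real.sqrt_sq]; norm_num]
        exact Real.sqrt_le_sqrt (by norm_num)
      have : K2 * Real.sqrt 2 ≤ K2 * (3/2) := by nlinarith
      rw [hMdef]; nlinarith
    calc |deriv A w - deriv A z|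
        ≤ Real.sqrt ((∫ t in z..w, (iteratedDeriv 2 A t)^2) * (w - z)) := h1
      _ ≤ Real.sqrt (CA2 * 2) := Real.sqrt_le_sqrt h2
      _ ≤ M/8 := h3
  have glob_bound : ∀ (T : Set ℝ), MeasurableSet T → (∫ t in T, q t) ≤ CQ := by
    intro T hT
    rw [hCQdef]
    exact setIntegral_le_integral hq (Eventually.of_forall hq0)
  by_cases hcase : ∃ y ∈ Icc (x₀-2) (x₀+2), |A y| ≤ M/2
  · -- Case 2: A comes below M/2 somewhere in the window
    obtain ⟨y, hy, hAy⟩ := hcase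
    have hxy_ne : y ≠ x₀ := by
      intro h; rw [h] at hAy; linarith [hcon, abs_nonneg (A x₀)]
    have hslope : ∃ z : ℝ, M/4 ≤ |deriv A z| := by
      have hdiff : |A x₀ - A y| > M/2 := by
        have := abs_sub_abs_le_abs_sub (A x₀) (A y)
        linarith
      rcases lt_or_gt_of_ne hxy_ne with h | h
      · obtain ⟨z, hz, hz2⟩ := exists_hasDerivAt_eq_slope A (deriv A) h
          (hAd.continuous.continuousOn) (fun t _ => (hAd t).hasDerivAt)
        refine ⟨z, ?_⟩
        rw [hz2, abs_div]
        rw [le_div_iff₀ (by rw [abs_of_pos (by linarith : (0:ℝ) < x₀ - y)]; linarith)]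
        have hd : |x₀ - y| ≤ 2 := by
          rw [abs_of_pos (by linarith : (0:ℝ) < x₀ - y)]
          have := hy.1; linarith
        nlinarith [abs_nonneg (x₀ - y), hM0]
      · obtain ⟨z, hz, hz2⟩ := exists_hasDerivAt_eq_slope A (deriv A) h
          (hAd.continuous.continuousOn) (fun t _ => (hAd t).hasDerivAt)
        refine ⟨z, ?_⟩
        rw [hz2, abs_div]
        rw [le_div_iff₀ (by rw [abs_of_pos (by linarith : (0:ℝ) < y - x₀)]; linarith)]
        have hd : |y - x₀| ≤ 2 := by
          rw [abs_of_pos (by linarith : (0:ℝ) < y - x₀)]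
          have := hy.2; linarith
        rw [abs_sub_comm (A y) (A x₀)]
        nlinarith [abs_nonneg (y - x₀), hM0]
    obtain ⟨z, hz⟩ := hslope
    have speed : ∀ w₁ w₂, z ≤ w₁ → w₁ ≤ w₂ → w₂ ≤ z + 2 →
        M/8 * (w₂ - w₁) ≤ |A w₂ - A w₁| := by
      intro w₁ w₂ h1 h12 h2
      have ftcA : ∫ t in w₁..w₂, deriv A t = A w₂ - A w₁ :=
        intervalIntegral.integral_deriv_eq_sub (fun t _ => hAd t)
          (hA1c.intervalIntegrable _ _)
      rcases abs_cases (deriv A z) with ⟨he, _⟩ | ⟨he, _⟩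
      · have hpos : ∀ w ∈ Icc w₁ w₂, M/8 ≤ deriv A w := by
          intro w hw
          have := holder z w (by linarith [hw.1]) (by linarith [hw.2])
          rw [abs_sub_le_iff] at this
          rw [he] at hz
          linarith [this.2]
        have hmono : (M/8) * (w₂ - w₁) ≤ ∫ t in w₁..w₂, deriv A t := by
          have h := intervalIntegral.integral_mono_on (μ := volume) h12
            (_root_.intervalIntegrable_const (c := M/8)) (hA1c.intervalIntegrable _ _) hpos
          rwa [intervalIntegral.integral_const, smul_eq_mul, mul_comm] at h
        rw [ftcA] at hmono
        exact hmono.trans (le_abs_self _)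
      · have hneg : ∀ w ∈ Icc w₁ w₂, deriv A w ≤ -(M/8) := by
          intro w hw
          have := holder z w (by linarith [hw.1]) (by linarith [hw.2])
          rw [abs_sub_le_iff] at this
          rw [he] at hz
          linarith [this.1]
        have hmono : ∫ t in w₁..w₂, deriv A t ≤ (-(M/8)) * (w₂ - w₁) := by
          have h := intervalIntegral.integral_mono_on (μ := volume) h12
            (hA1c.intervalIntegrable _ _) (_root_.intervalIntegrable_const (c := -(M/8))) hneg
          rwa [intervalIntegral.integral_const, smul_eq_mul, mul_comm] at h
        rw [ftcA] at hmono
        have habs := le_abs_self (-(A w₂ - A w₁))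
        rw [abs_neg] at habs
        linarith
    obtain ⟨d, hddef⟩ : ∃ d : ℝ, d = 16 * s / M := ⟨_, rfl⟩
    have hd0 : 0 < d := by rw [hddef]; positivity
    have hdhalf : d ≤ 1/4 := by
      rw [hddef, div_le_iff₀ hM0, hMdef]; nlinarith
    obtain ⟨w₀, hw₀⟩ : ∃ w₀ : ℝ, ∀ w ∈ Icc z (z+2), (A w)^2 < 1 + c → |w - w₀| ≤ d := by
      by_cases hbad : ∃ w ∈ Icc z (z+2), (A w)^2 < 1 + c
      · obtain ⟨w₀, hw₀J, hw₀bad⟩ := hbad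
        refine ⟨w₀, fun w hw hwbad => ?_⟩
        have hs' : |A w| < s := by
          rw [← Real.sqrt_sq_eq_abs, hsdef]
          exact Real.sqrt_lt_sqrt (sq_nonneg _) hwbad
        have hs'' : |A w₀| < s := by
          rw [← Real.sqrt_sq_eq_abs, hsdef]
          exact Real.sqrt_lt_sqrt (sq_nonneg _) hw₀bad
        have hAB : |A w - A w₀| < 2 * s := by
          calc |A w - A w₀| ≤ |A w| + |A w₀| := abs_sub _ _
            _ < 2 * s := by linarith
        rcases le_total w w₀ with h | h
        · have := speed w w₀ hw.1 h hw₀J.2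
          rw [abs_sub_comm] at hAB
          rw [abs_of_nonpos (by linarith : w - w₀ ≤ 0)]
          rw [hddef, neg_sub, le_div_iff₀ hM0]
          nlinarith
        · have := speed w₀ w hw₀J.1 h hw.2
          rw [abs_of_nonneg (by linarith : 0 ≤ w - w₀)]
          rw [hddef, le_div_iff₀ hM0]
          nlinarith
      · push_neg at hbad
        exact ⟨z, fun w hw hwbad => absurd hwbad (not_lt.mpr (hbad w hw))⟩
    obtain ⟨G, hGdef⟩ : ∃ G : Set ℝ, G = Icc z (z+2) \ Icc (w₀ - d) (w₀ + d) := ⟨_, rfl⟩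
    have hGmeas : MeasurableSet G := hGdef ▸ measurableSet_Icc.diff measurableSet_Icc
    have hGsub : G ⊆ Icc z (z+2) := hGdef ▸ diff_subset
    have hGgood : ∀ w ∈ G, CQ + 1 ≤ q w := by
      intro w hw
      rw [hGdef] at hw
      have h1 : ¬ ((A w)^2 < 1 + c) := by
        intro hbad
        have := hw₀ w hw.1 hbad
        rw [abs_le] at this
        exact hw.2 ⟨by linarith [this.1], by linarith [this.2]⟩
      push_neg at h1
      have := hlow w c hc0 h1
      linarith [hc2.le, this]
    have hGvol : 1 ≤ (volume G).toReal := by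
      have h1 : volume (Icc z (z+2)) - volume (Icc (w₀-d) (w₀+d)) ≤ volume G := by
        rw [hGdef]; exact le_measure_diff
      have h2 : volume (Icc z (z+2)) = ENNReal.ofReal 2 := by
        rw [Real.volume_Icc]; norm_num
      have h3 : volume (Icc (w₀-d) (w₀+d)) = ENNReal.ofReal (2*d) := by
        rw [Real.volume_Icc]; congr 1; ring
      have h4 : ENNReal.ofReal (2 - 2*d) ≤ volume G := by
        rw [h2, h3] at h1
        refine le_trans ?_ h1
        rw [← ENNReal.ofReal_sub _ (by positivity)]
      have h5 : volume G ≠ ⊤ := by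
        refine ne_top_of_le_ne_top ?_ (measure_mono hGsub)
        rw [Real.volume_Icc]; exact ENNReal.ofReal_ne_top
      have h6 := ENNReal.toReal_mono h5 h4
      rw [ENNReal.toReal_ofReal (by linarith)] at h6
      linarith
    have hglow : (CQ + 1) * (volume G).toReal ≤ ∫ w in G, q w := by
      apply setIntegral_ge_of_const_le_real hGmeas
      · refine ne_top_of_le_ne_top ?_ (measure_mono hGsub)
        rw [Real.volume_Icc]; exact ENNReal.ofReal_ne_top
      · exact hGgood
      · exact hq.integrableOn
    have hfin : CQ + 1 ≤ CQ := by
      calc CQ + 1 = (CQ+1) * 1 := by ring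
        _ ≤ (CQ+1) * (volume G).toReal := by nlinarith
        _ ≤ ∫ w in G, q w := hglow
        _ ≤ CQ := glob_bound G hGmeas
    linarith
  · -- Case 1: |A| > M/2 on the whole window
    push_neg at hcase
    have hgood : ∀ y ∈ Icc (x₀-2) (x₀+2), CQ + 1 ≤ q y := by
      intro y hy
      have h1 : M/2 < |A y| := hcase y hy
      have h2 : 1 + c ≤ (A y)^2 := by
        have hsM : s ≤ M/2 := by rw [hMdef]; nlinarith
        have h3 : s^2 ≤ (A y)^2 := by
          rw [← sq_abs (A y)]
          apply pow_le_pow_left₀ (by linarith [hs1]) (by linarith)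
        linarith [hs2.ge]
      have := hlow y c hc0 h2
      linarith [hc2.le]
    have hlow2 : (CQ + 1) * 4 ≤ ∫ y in Icc (x₀-2) (x₀+2), q y := by
      have := setIntegral_ge_of_const_le_real measurableSet_Icc
        (by rw [Real.volume_Icc]; exact ENNReal.ofReal_ne_top) hgood hq.integrableOn
      rwa [measureReal_def, Real.volume_Icc, show x₀ + 2 - (x₀ - 2) = 4 by ring,
        ENNReal.toReal_ofReal (by norm_num)] at this
    have := glob_bound _ (measurableSet_Icc (a := x₀-2) (b := x₀+2))
    linarith


/-- A general decay lemma: if `φ∘v` is integrable, `v = (A,B)` stays in a compact box,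
`A` is Lipschitz and `B` has square-integrable derivative, then `φ∘v → 0` at `+∞`. -/
lemma phi_to_zero {φ : ℝ × ℝ → ℝ} (hφ : Continuous φ)
    {A B : ℝ → ℝ} {MA MB K1 : ℝ}
    (hBC : ContDiff ℝ 1 B)
    (hMA : ∀ x, |A x| ≤ MA) (hMB : ∀ x, |B x| ≤ MB)
    (hK1 : 0 ≤ K1) (hlip : ∀ x y : ℝ, x ≤ y → |A y - A x| ≤ K1 * (y - x))
    (hB1int : Integrable (fun x => (deriv B x)^2))
    (hP : Integrable (fun x => φ (A x, B x)))
    (hP0 : ∀ x, 0 ≤ φ (A x, B x)) :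
    Tendsto (fun x => φ (A x, B x)) atTop (nhds 0) := by
  have hBc : Continuous B := hBC.continuous
  have hB1c : Continuous (deriv B) := hBC.continuous_deriv le_rfl
  -- uniform continuity on the box
  have hKcpt : IsCompact (Icc (-MA) MA ×ˢ Icc (-MB) MB) :=
    isCompact_Icc.prod isCompact_Icc
  have hunif : UniformContinuousOn φ (Icc (-MA) MA ×ˢ Icc (-MB) MB) :=
    hKcpt.uniformContinuousOn_of_continuous hφ.continuousOn
  rw [Metric.uniformContinuousOn_iff] at hunif
  have hmem : ∀ x : ℝ, (A x, B x) ∈ Icc (-MA) MA ×ˢ Icc (-MB) MB := by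
    intro x
    constructor
    · exact abs_le.mp (hMA x)
    · exact abs_le.mp (hMB x)
  -- tails
  have htailB := tendsto_tail_integral_nonneg hB1int (fun x => sq_nonneg _)
  have htailP := tendsto_tail_integral_nonneg hP (fun x => hP0 x)
  rw [Metric.tendsto_atTop]
  intro ε hε
  obtain ⟨δ, hδ0, hδ⟩ := hunif (ε/2) (by linarith)
  obtain ⟨h, hh0, hh1, hhK⟩ : ∃ h : ℝ, 0 < h ∧ h ≤ 1 ∧ K1 * h < δ := by
    refine ⟨min 1 (δ/(2*(K1+1))), lt_min one_pos (by positivity), min_le_left _ _, ?_⟩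
    calc K1 * min 1 (δ/(2*(K1+1))) ≤ K1 * (δ/(2*(K1+1))) := by
          apply mul_le_mul_of_nonneg_left (min_le_right _ _) hK1
      _ < δ := by
          rw [div_eq_mul_inv]
          rw [show K1 * (δ * (2*(K1+1))⁻¹) = δ * (K1 / (2*(K1+1))) by field_simp]
          have hlt : K1 / (2*(K1+1)) < 1 := by
            rw [div_lt_one (by linarith)]; linarith
          nlinarith [hδ0]
  rw [Metric.tendsto_atTop] at htailB htailP
  obtain ⟨X₁, hX₁⟩ := htailB (δ^2/4) (by positivity)
  obtain ⟨X₂, hX₂⟩ := htailP (ε/2 * h) (by positivity)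
  refine ⟨max X₁ X₂, fun x hx => ?_⟩
  rw [Real.dist_eq, sub_zero, abs_of_nonneg (hP0 x)]
  by_contra hcon
  push_neg at hcon
  -- `φ∘v` stays above `ε/2` on `[x, x+h]`
  have hclose : ∀ y ∈ Icc x (x+h), ε/2 ≤ φ (A y, B y) := by
    intro y hy
    have hdA : |A y - A x| < δ := by
      have := hlip x y hy.1
      have h2 : K1 * (y - x) ≤ K1 * h := by
        apply mul_le_mul_of_nonneg_left (by linarith [hy.2]) hK1
      linarith
    have hdB : |B y - B x| < δ := by
      have h1 := ftc_move hBC hy.1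
      have h2 : (∫ t in x..y, (deriv B t)^2) * (y - x) < δ^2/4 * 1 := by
        have h3 : ∫ t in x..y, (deriv B t)^2 ≤ ∫ t in Ici X₁, (deriv B t)^2 :=
          loc_le_tail hB1c hB1int (le_trans (le_max_left _ _) hx) hy.1
        have h4 := hX₁ X₁ le_rfl
        rw [Real.dist_eq, sub_zero] at h4
        have h5 : ∫ t in Ici X₁, (deriv B t)^2 < δ^2/4 := lt_of_abs_lt h4
        have h6 : 0 ≤ ∫ t in x..y, (deriv B t)^2 :=
          intervalIntegral.integral_nonneg hy.1 (fun t _ => sq_nonneg _)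
        nlinarith [hy.1, hy.2, hh0, hh1]
      calc |B y - B x| ≤ Real.sqrt ((∫ t in x..y, (deriv B t)^2) * (y - x)) := h1
        _ < Real.sqrt (δ^2/4 * 1) := by
            apply Real.sqrt_lt_sqrt ?_ h2
            apply mul_nonneg (intervalIntegral.integral_nonneg hy.1 (fun t _ => sq_nonneg _))
            linarith [hy.1]
        _ = δ/2 := by
            rw [mul_one, show δ^2/4 = (δ/2)^2 by ring, Real.sqrt_sq (by linarith)]
        _ < δ := by linarith
    have hdist : dist (A y, B y) (A x, B x) < δ := by
      rw [Prod.dist_eq]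
      apply max_lt
      · rw [Real.dist_eq]; exact hdA
      · rw [Real.dist_eq]; exact hdB
    have := hδ _ (hmem y) _ (hmem x) hdist
    rw [Real.dist_eq] at this
    have h7 := abs_lt.mp this
    linarith [h7.1, h7.2]
  -- integrate: tail integral is too small
  have hlow : ε/2 * h ≤ ∫ y in Icc x (x+h), φ (A y, B y) := by
    have := setIntegral_ge_of_const_le_real measurableSet_Icc
      (by rw [Real.volume_Icc]; exact ENNReal.ofReal_ne_top) hclose hP.integrableOn
    rwa [measureReal_def, Real.volume_Icc, show x + h - x = h by ring,
      ENNReal.toReal_ofReal hh0.le] at this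
  have hup : ∫ y in Icc x (x+h), φ (A y, B y) ≤ ∫ y in Ici X₂, φ (A y, B y) := by
    apply setIntegral_mono_set hP.integrableOn (Eventually.of_forall fun t => hP0 t)
    apply HasSubset.Subset.eventuallyLE
    intro t ht
    exact le_trans (le_trans (le_max_right X₁ X₂) hx) ht.1
  have h8 := hX₂ X₂ le_rfl
  rw [Real.dist_eq, sub_zero] at h8
  have h9 : ∫ y in Ici X₂, φ (A y, B y) < ε/2 * h := lt_of_abs_lt h8
  linarith


lemma components {ϵ g : ℝ} (hϵ : 0 < ϵ) (hg : 1 < g) {A B : ℝ → ℝ}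
    (hA : ContDiff ℝ 2 A) (hB : ContDiff ℝ 1 B) (hJ : Jfun ϵ g A B ≠ ⊤) :
    Integrable (fun x => (iteratedDeriv 2 A x)^2) ∧
    Integrable (fun x => (deriv B x)^2) ∧
    Integrable (fun x => Pfun g (A x) (B x)) := by
  have hA1 : ContDiff ℝ 1 (deriv A) :=
    (contDiff_succ_iff_deriv.mp (show ContDiff ℝ (1+1) A by exact_mod_cast hA)).2.2
  have hiter : deriv (deriv A) = iteratedDeriv 2 A := by
    rw [iteratedDeriv_succ, iteratedDeriv_one]
  have hA2cont : Continuous (iteratedDeriv 2 A) := hiter ▸ (hA1.continuous_deriv le_rfl)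
  have hB1cont : Continuous (deriv B) := hB.continuous_deriv le_rfl
  have hPcont : Continuous (fun x => Pfun g (A x) (B x)) :=
    (Pfun_continuous g).comp (hA.continuous.prodMk hB.continuous)
  set f : ℝ → ℝ := fun x => (ϵ/2) * (iteratedDeriv 2 A x) ^ 2
    + (1/2) * (deriv B x) ^ 2 + Pfun g (A x) (B x) with hf
  have hfcont : Continuous f := by
    apply Continuous.add
    apply Continuous.add
    · exact continuous_const.mul (hA2cont.pow 2)
    · exact continuous_const.mul (hB1cont.pow 2)
    · exact hPcont
  have hf0 : ∀ x, 0 ≤ f x := by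
    intro x
    have h1 : 0 ≤ (ϵ/2) * (iteratedDeriv 2 A x) ^ 2 := by positivity
    have h2 : 0 ≤ (1/2) * (deriv B x) ^ 2 := by positivity
    have h3 := Pfun_nonneg hg (A x) (B x)
    simp only [hf]; linarith
  have hfint : Integrable f := by
    refine ⟨hfcont.aestronglyMeasurable, ?_⟩
    rw [hasFiniteIntegral_iff_ofReal (Eventually.of_forall hf0)]
    rw [lt_top_iff_ne_top]
    exact hJ
  refine ⟨?_, ?_, ?_⟩
  · apply Integrable.mono' (hfint.const_mul (2/ϵ)) (show Continuous (fun x => (iteratedDeriv 2 A x)^2) from hA2cont.pow 2).aestronglyMeasurable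
    apply Eventually.of_forall
    intro x
    rw [Real.norm_of_nonneg (sq_nonneg _)]
    have h2 : 0 ≤ (1/2) * (deriv B x) ^ 2 := by positivity
    have h3 := Pfun_nonneg hg (A x) (B x)
    have hfx : (ϵ/2) * (iteratedDeriv 2 A x) ^ 2 ≤ f x := by
      simp only [hf]; linarith
    have heq : (2/ϵ) * ((ϵ/2) * (iteratedDeriv 2 A x) ^ 2) = (iteratedDeriv 2 A x)^2 := by
      field_simp
    calc (iteratedDeriv 2 A x)^2 = (2/ϵ) * ((ϵ/2) * (iteratedDeriv 2 A x) ^ 2) := heq.symm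
      _ ≤ (2/ϵ) * f x := mul_le_mul_of_nonneg_left hfx (by positivity)
  · apply Integrable.mono' (hfint.const_mul 2) (show Continuous (fun x => (deriv B x)^2) from hB1cont.pow 2).aestronglyMeasurable
    apply Eventually.of_forall
    intro x
    rw [Real.norm_of_nonneg (sq_nonneg _)]
    have h1 : 0 ≤ (ϵ/2) * (iteratedDeriv 2 A x) ^ 2 := by positivity
    have h3 := Pfun_nonneg hg (A x) (B x)
    simp only [hf]
    nlinarith [sq_nonneg (deriv B x)]
  · apply Integrable.mono' hfint hPcont.aestronglyMeasurable
    apply Eventually.of_forall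
    intro x
    rw [Real.norm_of_nonneg (Pfun_nonneg hg (A x) (B x))]
    have h1 : 0 ≤ (ϵ/2) * (iteratedDeriv 2 A x) ^ 2 := by positivity
    have h2 : 0 ≤ (1/2) * (deriv B x) ^ 2 := by positivity
    simp only [hf]
    linarith

lemma lip_move {A : ℝ → ℝ} (hA : ContDiff ℝ 2 A) {K1 : ℝ}
    (hK1 : ∀ x, |deriv A x| ≤ K1) {x y : ℝ} (hxy : x ≤ y) :
    |A y - A x| ≤ K1 * (y - x) := by
  have hAd : Differentiable ℝ A := hA.differentiable (by norm_num)
  have hA1c : Continuous (deriv A) := hA.continuous_deriv (by norm_num)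
  have hftc : ∫ t in x..y, deriv A t = A y - A x :=
    intervalIntegral.integral_deriv_eq_sub (fun t _ => hAd t) (hA1c.intervalIntegrable _ _)
  rw [← hftc]
  calc |∫ t in x..y, deriv A t| ≤ ∫ t in x..y, |deriv A t| :=
        intervalIntegral.abs_integral_le_integral_abs hxy
    _ ≤ ∫ t in x..y, K1 := by
        apply intervalIntegral.integral_mono_on hxy (hA1c.abs.intervalIntegrable _ _)
          (_root_.intervalIntegrable_const (μ := volume) (c := K1))
        exact fun t _ => hK1 t
    _ = K1 * (y - x) := by rw [intervalIntegral.integral_const, smul_eq_mul, mul_comm]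

lemma deriv_to_zero {A : ℝ → ℝ} (hA : ContDiff ℝ 2 A)
    (hA2 : Integrable (fun x => (iteratedDeriv 2 A x)^2)) {l : ℝ}
    (hconv : Tendsto A atTop (nhds l)) :
    Tendsto (deriv A) atTop (nhds 0) := by
  have hA1 : ContDiff ℝ 1 (deriv A) :=
    (contDiff_succ_iff_deriv.mp (show ContDiff ℝ (1+1) A by exact_mod_cast hA)).2.2
  have hAd : Differentiable ℝ A := hA.differentiable (by norm_num)
  have hiter : deriv (deriv A) = iteratedDeriv 2 A := by
    rw [iteratedDeriv_succ, iteratedDeriv_one]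
  have hA2cont : Continuous (iteratedDeriv 2 A) := hiter ▸ (hA1.continuous_deriv le_rfl)
  have htail := tendsto_tail_integral_nonneg hA2 (fun x => sq_nonneg _)
  rw [Metric.tendsto_atTop] at htail hconv ⊢
  intro ε hε
  obtain ⟨N₁, hN₁⟩ := hconv (ε/8) (by linarith)
  obtain ⟨N₂, hN₂⟩ := htail (ε^2/16) (by positivity)
  refine ⟨max N₁ N₂, fun x hx => ?_⟩
  have hx1 : N₁ ≤ x := le_trans (le_max_left _ _) hx
  have hx2 : N₂ ≤ x := le_trans (le_max_right _ _) hx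
  obtain ⟨c, hc, hcslope⟩ := exists_hasDerivAt_eq_slope A (deriv A)
    (by linarith : x < x + 1) (hAd.continuous.continuousOn) (fun t _ => (hAd t).hasDerivAt)
  have hslope : |deriv A c| < ε/4 := by
    rw [hcslope]
    have h1 := hN₁ x hx1
    have h2 := hN₁ (x+1) (by linarith)
    rw [Real.dist_eq] at h1 h2
    rw [show x + 1 - x = 1 by ring, div_one, abs_lt]
    rw [abs_lt] at h1 h2
    constructor <;> [linarith [h1.1, h1.2, h2.1, h2.2]; linarith [h1.1, h1.2, h2.1, h2.2]]
  have hdiff : |deriv A c - deriv A x| < ε/4 := by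
    have h1 := ftc_move hA1 hc.1.le
    rw [hiter] at h1
    have h2 : (∫ t in x..c, (iteratedDeriv 2 A t)^2) * (c - x) < ε^2/16 * 1 := by
      have h3 : ∫ t in x..c, (iteratedDeriv 2 A t)^2 ≤ ∫ t in Ici N₂, (iteratedDeriv 2 A t)^2 :=
        loc_le_tail hA2cont hA2 hx2 hc.1.le
      have h4 := hN₂ N₂ le_rfl
      rw [Real.dist_eq, sub_zero] at h4
      have h5 := lt_of_abs_lt h4
      have h6 : 0 ≤ ∫ t in x..c, (iteratedDeriv 2 A t)^2 :=
        intervalIntegral.integral_nonneg hc.1.le (fun t _ => sq_nonneg _)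
      nlinarith [hc.1, hc.2]
    calc |deriv A c - deriv A x|
        ≤ Real.sqrt ((∫ t in x..c, (iteratedDeriv 2 A t)^2) * (c - x)) := h1
      _ < Real.sqrt (ε^2/16 * 1) := by
          apply Real.sqrt_lt_sqrt ?_ h2
          apply mul_nonneg (intervalIntegral.integral_nonneg hc.1.le (fun t _ => sq_nonneg _))
          linarith [hc.1]
      _ = ε/4 := by
          rw [mul_one, show ε^2/16 = (ε/4)^2 by ring, Real.sqrt_sq (by linarith)]
  rw [Real.dist_eq, sub_zero]
  calc |deriv A x| ≤ |deriv A c| + |deriv A c - deriv A x| := by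
        have := abs_sub_abs_le_abs_sub (deriv A x) (deriv A c)
        rw [abs_sub_comm] at this
        linarith [this]
    _ < ε := by linarith


-- test of the glue lemmas for the final assembly
lemma Pfun_S_zero {g : ℝ} {L : ℝ × ℝ}
    (hL : L ∈ ({(1, 0), (-1, 0), (0, 1), (0, -1)} : Set (ℝ × ℝ))) :
    Pfun g L.1 L.2 = 0 := by
  simp only [Set.mem_insert_iff, Set.mem_singleton_iff] at hL
  rcases hL with rfl | rfl | rfl | rfl <;> norm_num [Pfun]

lemma qint {g : ℝ} (hg : 1 < g) {A B : ℝ → ℝ} (hAc : Continuous A) (hBc : Continuous B)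
    (hPint : Integrable (fun x => Pfun g (A x) (B x))) :
    Integrable (fun x => ((A x)^2 + (B x)^2 - 1)^2) := by
  have hqcont : Continuous (fun x => ((A x)^2 + (B x)^2 - 1)^2) :=
    (((hAc.pow 2).add (hBc.pow 2)).sub continuous_const).pow 2
  apply Integrable.mono' (hPint.const_mul 4) hqcont.aestronglyMeasurable
  apply Eventually.of_forall
  intro x
  rw [Real.norm_of_nonneg (sq_nonneg _)]
  unfold Pfun
  nlinarith [mul_nonneg (mul_nonneg (sq_nonneg (A x)) (sq_nonneg (B x)))
    (by linarith : (0:ℝ) ≤ g - 1)]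

lemma Jfun_reflect (ϵ g : ℝ) (A B : ℝ → ℝ) (hA : ContDiff ℝ 2 A) (hB : ContDiff ℝ 1 B) :
    Jfun ϵ g (fun x => A (-x)) (fun x => B (-x)) = Jfun ϵ g A B := by
  have hA1 : ContDiff ℝ 1 (deriv A) :=
    (contDiff_succ_iff_deriv.mp (show ContDiff ℝ (1+1) A by exact_mod_cast hA)).2.2
  have hiter : deriv (deriv A) = iteratedDeriv 2 A := by
    rw [iteratedDeriv_succ, iteratedDeriv_one]
  have hA2cont : Continuous (iteratedDeriv 2 A) := hiter ▸ (hA1.continuous_deriv le_rfl)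
  have hB1cont : Continuous (deriv B) := hB.continuous_deriv le_rfl
  have hPcont : Continuous (fun x => Pfun g (A x) (B x)) :=
    (Pfun_continuous g).comp (hA.continuous.prodMk hB.continuous)
  have hfcont : Continuous (fun x => (ϵ/2) * (iteratedDeriv 2 A x) ^ 2
      + (1/2) * (deriv B x) ^ 2 + Pfun g (A x) (B x)) :=
    ((continuous_const.mul (hA2cont.pow 2)).add
      (continuous_const.mul (hB1cont.pow 2))).add hPcont
  unfold Jfun
  have hpt : ∀ x : ℝ, ENNReal.ofReal ((ϵ/2) * (iteratedDeriv 2 (fun y => A (-y)) x) ^ 2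
      + (1/2) * (deriv (fun y => B (-y)) x) ^ 2 + Pfun g (A (-x)) (B (-x)))
      = ENNReal.ofReal ((ϵ/2) * (iteratedDeriv 2 A (-x)) ^ 2
      + (1/2) * (deriv B (-x)) ^ 2 + Pfun g (A (-x)) (B (-x))) := by
    intro x
    have e1 : iteratedDeriv 2 (fun y => A (-y)) x = iteratedDeriv 2 A (-x) := by
      rw [iteratedDeriv_comp_neg 2 A x]; norm_num
    have e2 : deriv (fun y => B (-y)) x = -deriv B (-x) := deriv_comp_neg B x
    rw [e1, e2]
    congr 1
    ring
  calc ∫⁻ x : ℝ, ENNReal.ofReal ((ϵ/2) * (iteratedDeriv 2 (fun y => A (-y)) x) ^ 2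
      + (1/2) * (deriv (fun y => B (-y)) x) ^ 2 + Pfun g (A (-x)) (B (-x)))
      = ∫⁻ x : ℝ, ENNReal.ofReal ((ϵ/2) * (iteratedDeriv 2 A (-x)) ^ 2
        + (1/2) * (deriv B (-x)) ^ 2 + Pfun g (A (-x)) (B (-x))) := by
        exact lintegral_congr hpt
    _ = ∫⁻ x : ℝ, ENNReal.ofReal ((ϵ/2) * (iteratedDeriv 2 A x) ^ 2
        + (1/2) * (deriv B x) ^ 2 + Pfun g (A x) (B x)) := by
        exact (Measure.measurePreserving_neg (volume : Measure ℝ)).lintegral_comp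
          (ENNReal.measurable_ofReal.comp hfcont.measurable)

lemma key_atTop (ϵ g : ℝ) (hϵ : 0 < ϵ) (hg : 1 < g)
    (A B : ℝ → ℝ) (hA : ContDiff ℝ 2 A) (hB : ContDiff ℝ 1 B)
    (hJ : Jfun ϵ g A B ≠ ⊤) :
    (∃ L ∈ ({(1, 0), (-1, 0), (0, 1), (0, -1)} : Set (ℝ × ℝ)),
      Tendsto (fun x => (A x, B x)) atTop (nhds L)) ∧
    Tendsto (deriv A) atTop (nhds 0) := by
  obtain ⟨hA2int, hB1int, hPint⟩ := components hϵ hg hA hB hJ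
  have hqint := qint hg hA.continuous hB.continuous hPint
  have hq0 : ∀ x, 0 ≤ ((A x)^2 + (B x)^2 - 1)^2 := fun x => sq_nonneg _
  obtain ⟨MB, hMB0, hMB⟩ := B_bounded hB hB1int hqint hq0 (by
    intro x hx
    have h2 : (B x)^2 - 1 ≤ (A x)^2 + (B x)^2 - 1 := by nlinarith [sq_nonneg (A x)]
    nlinarith [sq_nonneg (A x)])
  obtain ⟨MA, hMA0, hMA⟩ := A_bounded hA hA2int hqint hq0 (by
    intro x c hc hcx
    have h1 : c ≤ (A x)^2 + (B x)^2 - 1 := by nlinarith [sq_nonneg (B x)]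
    nlinarith)
  have hK1 : ∀ x, |deriv A x| ≤ Real.sqrt (∫ t, (iteratedDeriv 2 A t)^2) + 2*MA :=
    A1_bounded hA hA2int hMA
  have hK10 : (0:ℝ) ≤ Real.sqrt (∫ t, (iteratedDeriv 2 A t)^2) + 2*MA := by positivity
  have hPz : Tendsto (fun x => Pfun g (A x) (B x)) atTop (nhds 0) :=
    phi_to_zero (Pfun_continuous g) hB hMA hMB hK10
      (fun x y hxy => lip_move hA hK1 hxy) hB1int hPint (fun x => Pfun_nonneg hg _ _)
  obtain ⟨L, hLS, hconv⟩ := converge_of_P_to_zero hg hA.continuous hB.continuous hMA hMB hPz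
  have hAconv : Tendsto A atTop (nhds L.1) := (continuous_fst.tendsto L).comp hconv
  exact ⟨⟨L, hLS, hconv⟩, deriv_to_zero hA hA2int hAconv⟩

/-- If `A ∈ C²(ℝ)`, `B ∈ C¹(ℝ)` and `J_{ϵ,g}(A,B) < ∞`, then
`P(A(x),B(x)) → 0` and `A'(x) → 0` as `|x| → ∞`, and the limits of `(A,B)` at
`±∞` exist and belong to `{(1,0), (−1,0), (0,1), (0,−1)}`. -/
theorem finite_energy_limits (ϵ g : ℝ) (hϵ : 0 < ϵ) (hg : 1 < g)
    (A B : ℝ → ℝ) (hA : ContDiff ℝ 2 A) (hB : ContDiff ℝ 1 B)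
    (hJ : Jfun ϵ g A B ≠ ⊤) :
    Tendsto (fun x => Pfun g (A x) (B x)) atTop (nhds 0) ∧
    Tendsto (fun x => Pfun g (A x) (B x)) atBot (nhds 0) ∧
    Tendsto (deriv A) atTop (nhds 0) ∧
    Tendsto (deriv A) atBot (nhds 0) ∧
    (∃ L ∈ ({(1, 0), (-1, 0), (0, 1), (0, -1)} : Set (ℝ × ℝ)),
      Tendsto (fun x => (A x, B x)) atTop (nhds L)) ∧
    (∃ L ∈ ({(1, 0), (-1, 0), (0, 1), (0, -1)} : Set (ℝ × ℝ)),
      Tendsto (fun x => (A x, B x)) atBot (nhds L)) := by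
  obtain ⟨⟨L, hLS, hconv⟩, hderiv⟩ := key_atTop ϵ g hϵ hg A B hA hB hJ
  have hAr : ContDiff ℝ 2 (fun x => A (-x)) := hA.comp (contDiff_id.neg)
  have hBr : ContDiff ℝ 1 (fun x => B (-x)) := hB.comp (contDiff_id.neg)
  have hJr : Jfun ϵ g (fun x => A (-x)) (fun x => B (-x)) ≠ ⊤ := by
    rw [Jfun_reflect ϵ g A B hA hB]; exact hJ
  obtain ⟨⟨L', hLS', hconv'⟩, hderiv'⟩ := key_atTop ϵ g hϵ hg _ _ hAr hBr hJr
  have hconvBot : Tendsto (fun x => (A x, B x)) atBot (nhds L') := by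
    have h1 := hconv'.comp tendsto_neg_atBot_atTop
    exact Tendsto.congr (fun x => by simp [Function.comp]) h1
  have hderivBot : Tendsto (deriv A) atBot (nhds 0) := by
    have h1 := hderiv'.comp tendsto_neg_atBot_atTop
    have h2 : ∀ x : ℝ, (deriv (fun y => A (-y)) ∘ Neg.neg) x = - deriv A x := by
      intro x
      show deriv (fun y => A (-y)) (-x) = - deriv A x
      rw [deriv_comp_neg A (-x), neg_neg]
    have h3 : Tendsto (fun x => - deriv A x) atBot (nhds 0) := Tendsto.congr h2 h1
    have h4 := h3.neg
    rw [neg_zero] at h4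
    exact h4.congr (fun x => by simp)
  have hPtop : Tendsto (fun x => Pfun g (A x) (B x)) atTop (nhds 0) := by
    have h1 := ((Pfun_continuous g).tendsto L).comp hconv
    rw [Pfun_S_zero hLS] at h1
    exact h1
  have hPbot : Tendsto (fun x => Pfun g (A x) (B x)) atBot (nhds 0) := by
    have h1 := ((Pfun_continuous g).tendsto L').comp hconvBot
    rw [Pfun_S_zero hLS'] at h1
    exact h1
  exact ⟨hPtop, hPbot, hderiv, hderivBot, ⟨L, hLS, hconv⟩, ⟨L', hLS', hconvBot⟩⟩
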